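/- The promise problem of deciding membership in the matrix multiplication tensor given the promise of the group structure tensor of (Z/nZ)² has deterministic communication complexity at most log₂ n: given that player A holds (a+b,b), player B holds (c,d+c), and player C holds (b+d,a+c), the input is in the matrix multiplication tensor iff b=c, and this single equality implies d+c=b+d and a+c=a+b. -/
import Mathlib


open Set

/-- The structure tensor of the group `(Z/nZ)²`, re-indexed as in the paper. -/
def T3set (n : ℕ) : Set ((ZMod n × ZMod n) × (ZMod n × ZMod n) × (ZMod n × ZMod n)) :=
  {t | ∃ a b c d : ZMod n, t = ((a + b, b), (c, d + c), (b + d, a + c))}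

/-- The matrix multiplication tensor over `Z/nZ`. -/
def MMset (n : ℕ) : Set ((ZMod n × ZMod n) × (ZMod n × ZMod n) × (ZMod n × ZMod n)) :=
  {t | ∃ i j k : ZMod n, t = ((i, j), (j, k), (k, i))}

/-- Deciding membership in the matrix multiplication tensor given the promise of the group
structure tensor of `(Z/nZ)²` takes at most `log₂ n` bits: `b = c` already implies the other
two required equalities, so there is a correct protocol with only `n` transcripts (player A
announces `b`), whose transcript fibers are combinatorial cubes and where each player
accepts based on their own input and the transcript. -/
theorem cc_mm_in_group_le_log (n : ℕ) (hn : 0 < n) :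
    (∀ a b c d : ZMod n, b = c → d + c = b + d ∧ a + c = a + b) ∧
    ∃ (tr : (ZMod n × ZMod n) × (ZMod n × ZMod n) × (ZMod n × ZMod n) → Fin n)
      (acc1 acc2 acc3 : ZMod n × ZMod n → Fin n → Prop),
      (∀ m : Fin n, ∃ X Y Z : Set (ZMod n × ZMod n), tr ⁻¹' {m} = X ×ˢ (Y ×ˢ Z)) ∧
      ∀ t ∈ T3set n,
        (t ∈ MMset n ↔ acc1 t.1 (tr t) ∧ acc2 t.2.1 (tr t) ∧ acc3 t.2.2 (tr t)) := by
  haveI : NeZero n := ⟨hn.ne'⟩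
  have e : ZMod n ≃ Fin n := Fintype.equivFinOfCardEq (ZMod.card n)
  refine ⟨fun a b c d h => by subst h; exact ⟨add_comm _ _, rfl⟩, fun t => e t.1.2, fun _ _ => True,
    fun y m => y.1 = e.symm m, fun _ _ => True, ?_, ?_⟩
  · intro m
    refine ⟨{x | e x.2 = m}, Set.univ, Set.univ, ?_⟩
    ext t
    simp [Set.mem_preimage]
  · rintro t ⟨a, b, c, d, rfl⟩
    constructor
    · rintro ⟨i, j, k, ht⟩
      simp only [Prod.mk.injEq] at ht
      obtain ⟨⟨h1, h2⟩, ⟨h3, h4⟩, h5, h6⟩ := ht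
      refine ⟨trivial, ?_, trivial⟩
      simp [h3, ← h2, Equiv.symm_apply_apply]
    · rintro ⟨-, h, -⟩
      simp only [Equiv.symm_apply_apply] at h
      subst h
      exact ⟨a + c, c, d + c, by rw [add_comm c d]⟩
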